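/- arXiv:1802.07110 — 4 statements merged into one kernel-verified Lean document; each statement's English description precedes it below -/
import Mathlib

section
/- Let 1 < p < N and suppose f satisfies (f_reg), (f_eq) and (f_subc). Then there exist ε > 0, C_ε > 0 and s_ε > 1 such that f(s) ≤ C_ε · s^{p*-1-ε} for every s > s_ε. -/
open Real Set Filter Topology

noncomputable def phip (p s : ℝ) : ℝ := |s| ^ (p - 2) * s

def Freg (f : ℝ → ℝ) : Prop :=
  ContinuousOn f (Ici 0) ∧ ContDiffOn ℝ 1 f (Ioi 0)

def Feq (f : ℝ → ℝ) : Prop :=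
  f 0 = 0 ∧ f 1 = 0 ∧ (∀ s : ℝ, 0 < s → s < 1 → f s < 0) ∧ (∀ s : ℝ, 1 < s → 0 < f s)

def Fzero (p : ℝ) (f : ℝ → ℝ) : Prop :=
  ∃ c : ℝ, ∀ᶠ s in 𝓝[>] (0:ℝ), c ≤ f s / s ^ (p - 1)

noncomputable def pstar (p : ℝ) (N : ℕ) : EReal :=
  if p < (N:ℝ) then (((N:ℝ) * p / ((N:ℝ) - p) : ℝ) : EReal) else ⊤

noncomputable def fstar (f : ℝ → ℝ) (s : ℝ) : ℝ := sSup (f '' Icc 1 s)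

noncomputable def Fint (f : ℝ → ℝ) (s : ℝ) : ℝ := ∫ σ in (1:ℝ)..s, f σ

def Fsubl (p : ℝ) (f : ℝ → ℝ) : Prop :=
  ∃ M : ℝ, 0 < M ∧ ∀ ε > 0, ∀ᶠ s in atTop, f s / s ^ (p - 1) ≤ M + ε

def FsubcWith (p : ℝ) (N : ℕ) (f : ℝ → ℝ) (η : ℝ) : Prop :=
  (∀ c : ℝ, ∃ᶠ s in atTop, c < f s / s ^ (p - 1)) ∧
  0 < η ∧ η < 1 ∧
  ∃ L : ℝ, (L : EReal) < pstar p N ∧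
    ∀ᶠ s in atTop, fstar f s * s / Fint f (η * s) ≤ L

def Fsubc (p : ℝ) (N : ℕ) (f : ℝ → ℝ) : Prop := ∃ η : ℝ, FsubcWith p N f η

/-- A radial solution of the Neumann problem on `[R1,R2]`. -/
def NeumannSol (p : ℝ) (N : ℕ) (R1 R2 : ℝ) (f u : ℝ → ℝ) : Prop :=
  (∀ x ∈ Icc R1 R2, DifferentiableAt ℝ u x) ∧
  ContinuousOn (deriv u) (Icc R1 R2) ∧
  (∀ x ∈ Icc R1 R2, 0 < u x) ∧
  deriv u R1 = 0 ∧ deriv u R2 = 0 ∧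
  ContinuousOn (fun x => x ^ (N - 1) * phip p (deriv u x)) (Icc R1 R2) ∧
  ∀ x ∈ Ioc R1 R2,
    HasDerivAt (fun t => t ^ (N - 1) * phip p (deriv u t)) (-(x ^ (N - 1)) * f (u x)) x

noncomputable def fhat (f : ℝ → ℝ) (s : ℝ) : ℝ := if 0 ≤ s then f s else 0

noncomputable def Fhat (f : ℝ → ℝ) (s : ℝ) : ℝ := ∫ σ in (1:ℝ)..s, fhat f σ

/-- A solution of the Cauchy problem with datum `d`, for the nonlinearity `g`. -/
def CauchySol (p : ℝ) (N : ℕ) (R1 R2 : ℝ) (g u : ℝ → ℝ) (d : ℝ) : Prop :=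
  (∀ x ∈ Icc R1 R2, DifferentiableAt ℝ u x) ∧
  ContinuousOn (deriv u) (Icc R1 R2) ∧
  u R1 = d ∧ deriv u R1 = 0 ∧
  ContinuousOn (fun x => x ^ (N - 1) * phip p (deriv u x)) (Icc R1 R2) ∧
  ∀ x ∈ Ioc R1 R2,
    HasDerivAt (fun t => t ^ (N - 1) * phip p (deriv u t)) (-(x ^ (N - 1)) * g (u x)) x

noncomputable def rOne (R1 R2 : ℝ) (u : ℝ → ℝ) : ℝ :=
  sSup {x | x ∈ Icc R1 R2 ∧ ∀ s ∈ Ico R1 x, 0 < u s}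

noncomputable def rZero (R2 η d : ℝ) (u : ℝ → ℝ) : ℝ :=
  sSup {x | x ∈ Icc 0 R2 ∧ ∀ s ∈ Ico 0 x, η * d < u s}

noncomputable def energy (p : ℝ) (f u : ℝ → ℝ) (x : ℝ) : ℝ :=
  |deriv u x| ^ p / (p / (p - 1)) + Fhat f (u x)

def NonConstOn (R1 R2 : ℝ) (u : ℝ → ℝ) : Prop :=
  ∃ x ∈ Icc R1 R2, ∃ x' ∈ Icc R1 R2, u x ≠ u x'

def DistinctOn (R1 R2 : ℝ) (u v : ℝ → ℝ) : Prop :=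
  ∃ x ∈ Icc R1 R2, u x ≠ v x

noncomputable def nOverPstar (p : ℝ) (N : ℕ) : ℝ :=
  if p < (N:ℝ) then ((N:ℝ) - p) / p else 0

/-!
Put `g(s) = F(ηs)`. Since `ηs ∈ [1, s]`, the hypothesis on `f*` gives
`s g'(s) = η s f(ηs) ≤ η s f*(s) ≤ ηL g(s)`, so `g(s) s^(-ηL)` is nonincreasing and
`g(s) = O(s^(ηL))`. Feeding this back, `f(s) ≤ f*(s) ≤ L g(s) / s = O(s^(ηL - 1))`, and
`ηL < L < p*` leaves the room `ε = p* - ηL`.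
-/

section

variable {f : ℝ → ℝ}

lemma antitoneOn_mul_rpow_neg_of_hasDerivAt {g g' : ℝ → ℝ} {q s₀ : ℝ} (hs₀ : 0 < s₀)
    (hg : ∀ s, s₀ ≤ s → HasDerivAt g (g' s) s) (hle : ∀ s, s₀ ≤ s → s * g' s ≤ q * g s) :
    AntitoneOn (fun s => g s * s ^ (-q)) (Ici s₀) := by
  have hderiv : ∀ s, s₀ ≤ s →
      HasDerivAt (fun s => g s * s ^ (-q)) (g' s * s ^ (-q) + g s * (-q * s ^ (-q - 1))) s :=
    fun s hs => (hg s hs).mul (hasDerivAt_rpow_const (Or.inl (hs₀.trans_le hs).ne'))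
  refine antitoneOn_of_hasDerivWithinAt_nonpos (convex_Ici s₀)
    (fun s hs => (hderiv s hs).continuousAt.continuousWithinAt)
    (fun s hs => (hderiv s (interior_subset hs)).hasDerivWithinAt) fun s hs => ?_
  replace hs : s₀ ≤ s := interior_subset hs
  have hs' : 0 < s := hs₀.trans_le hs
  have hsplit : s ^ (-q) = s ^ (-q - 1) * s := by
    rw [← rpow_add_one hs'.ne', sub_add_cancel]
  rw [hsplit]
  nlinarith [mul_le_mul_of_nonneg_left (hle s hs) (rpow_nonneg hs'.le (-q - 1))]

lemma le_mul_rpow_of_hasDerivAt {g g' : ℝ → ℝ} {q s₀ : ℝ} (hs₀ : 0 < s₀)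
    (hg : ∀ s, s₀ ≤ s → HasDerivAt g (g' s) s) (hle : ∀ s, s₀ ≤ s → s * g' s ≤ q * g s)
    {s : ℝ} (hs : s₀ ≤ s) : g s ≤ g s₀ * s₀ ^ (-q) * s ^ q := by
  have hmono := antitoneOn_mul_rpow_neg_of_hasDerivAt hs₀ hg hle
    (mem_Ici.2 le_rfl) hs hs
  have hs' : 0 < s := hs₀.trans_le hs
  calc g s = g s * s ^ (-q) * s ^ q := by
        rw [mul_assoc, ← rpow_add hs', neg_add_cancel, rpow_zero, mul_one]
    _ ≤ g s₀ * s₀ ^ (-q) * s ^ q := mul_le_mul_of_nonneg_right hmono (rpow_nonneg hs'.le _)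

lemma le_fstar (hf : ContinuousOn f (Ici 0)) {s x : ℝ} (hx : x ∈ Icc 1 s) :
    f x ≤ fstar f s :=
  le_csSup ((isCompact_Icc.image_of_continuousOn
    (hf.mono fun _ hy => zero_le_one.trans hy.1)).bddAbove) (mem_image_of_mem f hx)

lemma fstar_pos (hf : ContinuousOn f (Ici 0)) (hfpos : ∀ s, 1 < s → 0 < f s)
    {s : ℝ} (hs : 1 < s) : 0 < fstar f s :=
  (hfpos s hs).trans_le (le_fstar hf ⟨hs.le, le_rfl⟩)

lemma Fint_pos (hf : ContinuousOn f (Ici 0)) (hfpos : ∀ s, 1 < s → 0 < f s)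
    {t : ℝ} (ht : 1 < t) : 0 < Fint f t :=
  intervalIntegral.intervalIntegral_pos_of_pos_on
    (hf.mono fun _ hx => (le_min zero_le_one (by linarith)).trans hx.1).intervalIntegrable
    (fun x hx => hfpos x hx.1) ht

lemma hasDerivAt_Fint (hf : ContinuousOn f (Ici 0)) {t : ℝ} (ht : 0 < t) :
    HasDerivAt (Fint f) (f t) t :=
  intervalIntegral.integral_hasDerivAt_right
    (hf.mono fun _ hx => (le_min zero_le_one ht.le).trans hx.1).intervalIntegrable
    ((hf.mono Ioi_subset_Ici_self).stronglyMeasurableAtFilter isOpen_Ioi t ht)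
    (hf.continuousAt (Ici_mem_nhds ht))

lemma pos_of_fstar_mul_le_mul_Fint (hf : ContinuousOn f (Ici 0))
    (hfpos : ∀ s, 1 < s → 0 < f s) {s t L : ℝ} (hs : 1 < s) (ht : 1 < t)
    (h : fstar f s * s ≤ L * Fint f t) : 0 < L :=
  pos_of_mul_pos_left ((mul_pos (fstar_pos hf hfpos hs) (zero_lt_one.trans hs)).trans_le h)
    (Fint_pos hf hfpos ht).le

lemma le_mul_rpow_of_fstar_mul_le_mul_Fint (hf : ContinuousOn f (Ici 0))
    (hfpos : ∀ s, 1 < s → 0 < f s) {η L s₀ : ℝ} (hη0 : 0 < η) (hη1 : η ≤ 1)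
    (hηs₀ : 1 < η * s₀) (hL : 0 < L)
    (hkey : ∀ s, s₀ ≤ s → fstar f s * s ≤ L * Fint f (η * s)) :
    ∃ C > 0, ∀ s, s₀ ≤ s → f s ≤ C * s ^ (η * L - 1) := by
  have hs₀ : 0 < s₀ := pos_of_mul_pos_right (zero_lt_one.trans hηs₀) hη0.le
  have hηs : ∀ s, s₀ ≤ s → 1 < η * s := fun s hs =>
    hηs₀.trans_le (mul_le_mul_of_nonneg_left hs hη0.le)
  have hηs_le : ∀ s, s₀ ≤ s → η * s ≤ s := fun s hs =>
    mul_le_of_le_one_left (hs₀.trans_le hs).le hη1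
  set g : ℝ → ℝ := fun s => Fint f (η * s)
  have hg : ∀ s, s₀ ≤ s → HasDerivAt g (f (η * s) * η) s := fun s hs =>
    (hasDerivAt_Fint hf (zero_lt_one.trans (hηs s hs))).comp s
      ((hasDerivAt_id s).const_mul η |>.congr_deriv (mul_one η))
  have hle : ∀ s, s₀ ≤ s → s * (f (η * s) * η) ≤ η * L * g s := fun s hs => by
    have hf_le : f (η * s) * s ≤ fstar f s * s :=
      mul_le_mul_of_nonneg_right (le_fstar hf ⟨(hηs s hs).le, hηs_le s hs⟩)
        (hs₀.trans_le hs).le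
    nlinarith [mul_le_mul_of_nonneg_left (hf_le.trans (hkey s hs)) hη0.le]
  set K := g s₀ * s₀ ^ (-(η * L))
  have hK : 0 < K := mul_pos (Fint_pos hf hfpos hηs₀) (rpow_pos_of_pos hs₀ _)
  refine ⟨L * K, mul_pos hL hK, fun s hs => ?_⟩
  have hs' : 0 < s := hs₀.trans_le hs
  calc f s ≤ fstar f s := le_fstar hf ⟨((hηs s hs).trans_le (hηs_le s hs)).le, le_rfl⟩
    _ ≤ L * g s / s := (le_div_iff₀ hs').2 (hkey s hs)
    _ ≤ L * (K * s ^ (η * L)) / s := by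
        gcongr
        exact le_mul_rpow_of_hasDerivAt hs₀ hg hle hs
    _ = L * K * s ^ (η * L - 1) := by rw [rpow_sub_one hs'.ne']; ring

end

theorem stmt6_general (p : ℝ) (N : ℕ) (hpN : p < (N : ℝ))
    (f : ℝ → ℝ) (hreg : Freg f) (heq : Feq f) (hsubc : Fsubc p N f) :
    ∃ ε : ℝ, 0 < ε ∧ ∃ Cε : ℝ, 0 < Cε ∧ ∃ sε : ℝ, 1 < sε ∧
      ∀ s : ℝ, sε < s → f s ≤ Cε * s ^ ((N : ℝ) * p / ((N : ℝ) - p) - 1 - ε) := by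
  obtain ⟨hf, -⟩ := hreg
  obtain ⟨-, -, -, hfpos⟩ := heq
  obtain ⟨η, -, hη0, hη1, L, hLP, hev⟩ := hsubc
  rw [pstar, if_pos hpN, EReal.coe_lt_coe_iff] at hLP
  obtain ⟨a, ha⟩ := eventually_atTop.mp hev
  set s₀ := max a (2 / η)
  have hηs₀ : 1 < η * s₀ := by
    have : 2 ≤ η * s₀ := (div_le_iff₀' hη0).1 (le_max_right a _)
    linarith
  have hs₀ : 1 < s₀ := by nlinarith
  have hkey : ∀ s, s₀ ≤ s → fstar f s * s ≤ L * Fint f (η * s) := fun s hs =>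
    (div_le_iff₀ (Fint_pos hf hfpos
      (hηs₀.trans_le (mul_le_mul_of_nonneg_left hs hη0.le)))).1 (ha s (le_of_max_le_left hs))
  have hL : 0 < L := pos_of_fstar_mul_le_mul_Fint hf hfpos hs₀ hηs₀ (hkey s₀ le_rfl)
  obtain ⟨C, hC, hbound⟩ := le_mul_rpow_of_fstar_mul_le_mul_Fint hf hfpos hη0 hη1.le
    hηs₀ hL hkey
  refine ⟨N * p / (N - p) - η * L, by nlinarith, C, hC, s₀, hs₀, fun s hs => ?_⟩
  convert hbound s hs.le using 3
  ring

theorem stmt6 (p : ℝ) (N : ℕ) (hp1 : 1 < p) (hpN : p < (N : ℝ))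
    (f : ℝ → ℝ) (hreg : Freg f) (heq : Feq f) (hsubc : Fsubc p N f) :
    ∃ ε : ℝ, 0 < ε ∧ ∃ Cε : ℝ, 0 < Cε ∧ ∃ sε : ℝ, 1 < sε ∧
      ∀ s : ℝ, sε < s → f s ≤ Cε * s ^ ((N : ℝ) * p / ((N : ℝ) - p) - 1 - ε) :=
  stmt6_general p N hpN f hreg heq hsubc
end

section
/- Let f(s) = s^{q-1} - s^{r-1} with p ≤ r < q < p*. Then f satisfies (f_subc): limsup_{s→∞} f(s)/s^{p-1} = +∞, and there exists η ∈ (0,1) such that limsup_{s→∞} f*(s)·s/F(η s) < p*, where F(s) = ∫_1^s f(σ) dσ and f*(s) = max_{σ∈[1,s]} f(σ). -/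
open Real Set Filter Topology

/-!
The quotient f(s)/s^(p-1) = s^(q-p) - s^(r-p) is unbounded since r < q and p < q. For the second
condition, F(s) = (s^q - 1)/q - (s^r - 1)/r, so F(η s)/s^q → η^q/q, while
f*(s)·s ≤ s^(q-1)·s = s^q. Hence f*(s)·s/F(η s) is eventually below any L > q/η^q; choosing
q < L < p* and then η < 1 with η^q > q/L gives the bound.
-/

theorem tendsto_rpow_sub_rpow_atTop {a b : ℝ} (ha : 0 < a) (hba : b < a) :
    Tendsto (fun s : ℝ => s ^ a - s ^ b) atTop atTop := by
  have hsmall : Tendsto (fun s : ℝ => 1 - s ^ (-(a - b))) atTop (𝓝 1) := by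
    simpa using (tendsto_rpow_neg_atTop (sub_pos.mpr hba)).const_sub (1 : ℝ)
  refine ((tendsto_rpow_atTop ha).atTop_mul_pos one_pos hsmall).congr' ?_
  filter_upwards [eventually_gt_atTop 0] with s hs
  rw [mul_sub, mul_one, ← rpow_add hs]
  ring_nf

theorem tendsto_rpow_sub_rpow_div_rpow_atTop {p q r : ℝ} (hpr : p ≤ r) (hrq : r < q) :
    Tendsto (fun s : ℝ => (s ^ (q - 1) - s ^ (r - 1)) / s ^ (p - 1)) atTop atTop := by
  refine (tendsto_rpow_sub_rpow_atTop (a := q - p) (b := r - p) (by linarith)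
    (by linarith)).congr' ?_
  filter_upwards [eventually_gt_atTop 0] with s hs
  rw [sub_div, ← rpow_sub hs, ← rpow_sub hs]
  ring_nf

theorem Fint_rpow_sub_rpow {q r t : ℝ} (hq : q ≠ 0) (hr : r ≠ 0) (ht : 0 < t) :
    Fint (fun s => s ^ (q - 1) - s ^ (r - 1)) t = (t ^ q - 1) / q - (t ^ r - 1) / r := by
  have h0 : (0 : ℝ) ∉ uIcc 1 t := by
    simp [mem_uIcc, not_le.mpr ht, not_le.mpr one_pos]
  rw [Fint, intervalIntegral.integral_sub (intervalIntegral.intervalIntegrable_rpow (Or.inr h0))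
    (intervalIntegral.intervalIntegrable_rpow (Or.inr h0)),
    integral_rpow (Or.inr ⟨by simpa using hq, h0⟩),
    integral_rpow (Or.inr ⟨by simpa using hr, h0⟩)]
  norm_num

theorem tendsto_Fint_rpow_sub_rpow_mul_div_rpow {q r η : ℝ} (hr : 0 < r) (hrq : r < q)
    (hη : 0 < η) :
    Tendsto (fun s => Fint (fun s => s ^ (q - 1) - s ^ (r - 1)) (η * s) / s ^ q) atTop
      (𝓝 (η ^ q / q)) := by
  have hq : 0 < q := hr.trans hrq
  have hlim : Tendsto (fun s : ℝ =>
      η ^ q / q - η ^ r / r * s ^ (-(q - r)) + (1 / r - 1 / q) * s ^ (-q)) atTop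
      (𝓝 (η ^ q / q)) := by
    simpa using ((tendsto_rpow_neg_atTop (sub_pos.mpr hrq)).const_mul (η ^ r / r)).const_sub
      (η ^ q / q) |>.add ((tendsto_rpow_neg_atTop hq).const_mul (1 / r - 1 / q))
  refine hlim.congr' ?_
  filter_upwards [eventually_gt_atTop 0] with s hs
  rw [Fint_rpow_sub_rpow hq.ne' hr.ne' (mul_pos hη hs), mul_rpow hη.le hs.le,
    mul_rpow hη.le hs.le, rpow_neg hs.le, rpow_neg hs.le, rpow_sub hs]
  have := rpow_pos_of_pos hs q
  have := rpow_pos_of_pos hs r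
  field_simp
  ring

theorem fstar_rpow_sub_rpow_le {q r s : ℝ} (hq : 1 ≤ q) (hs : 1 ≤ s) :
    fstar (fun s => s ^ (q - 1) - s ^ (r - 1)) s ≤ s ^ (q - 1) := by
  refine csSup_le ((nonempty_Icc.mpr hs).image _) ?_
  rintro _ ⟨σ, ⟨hσ1, hσs⟩, rfl⟩
  have hσ0 : 0 < σ := one_pos.trans_le hσ1
  linarith [rpow_le_rpow hσ0.le hσs (sub_nonneg.mpr hq), rpow_pos_of_pos hσ0 (r - 1)]

theorem exists_lt_rpow_of_lt_one {c : ℝ} (hc : c < 1) (q : ℝ) :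
    ∃ η, 0 < η ∧ η < 1 ∧ c < η ^ q := by
  have hcont : Tendsto (fun η : ℝ => η ^ q) (𝓝[<] 1) (𝓝 1) := by
    simpa using (continuousAt_rpow_const 1 q (Or.inl one_ne_zero)).tendsto.mono_left
      nhdsWithin_le_nhds
  obtain ⟨η, ⟨hη0, hη1⟩, hcη⟩ :=
    (Filter.Eventually.and (Ioo_mem_nhdsLT one_pos)
      (hcont.eventually (eventually_gt_nhds hc))).exists
  exact ⟨η, hη0, hη1, hcη⟩

theorem eventually_fstar_mul_div_Fint_le {q r η L : ℝ} (hr : 0 < r) (hrq : r < q) (hq : 1 ≤ q)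
    (hη : 0 < η) (hL : q / η ^ q < L) :
    ∀ᶠ s in atTop, fstar (fun s => s ^ (q - 1) - s ^ (r - 1)) s * s /
      Fint (fun s => s ^ (q - 1) - s ^ (r - 1)) (η * s) ≤ L := by
  have hlim := tendsto_Fint_rpow_sub_rpow_mul_div_rpow hr hrq hη
  have hpos : 0 < η ^ q / q := by positivity
  have hratio : Tendsto (fun s => s ^ q / Fint (fun s => s ^ (q - 1) - s ^ (r - 1)) (η * s))
      atTop (𝓝 (q / η ^ q)) := by
    simpa [inv_div] using hlim.inv₀ hpos.ne'
  filter_upwards [hratio.eventually_le_const hL, hlim.eventually (eventually_gt_nhds hpos),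
    eventually_ge_atTop 1] with s hratio_le hF hs
  have hs0 : 0 < s := one_pos.trans_le hs
  have hFpos : 0 < Fint (fun s => s ^ (q - 1) - s ^ (r - 1)) (η * s) :=
    (div_pos_iff_of_pos_right (rpow_pos_of_pos hs0 q)).mp hF
  calc _ ≤ s ^ (q - 1) * s / Fint (fun s => s ^ (q - 1) - s ^ (r - 1)) (η * s) := by
        gcongr
        exact fstar_rpow_sub_rpow_le hq hs
    _ = s ^ q / Fint (fun s => s ^ (q - 1) - s ^ (r - 1)) (η * s) := by
        rw [← rpow_add_one hs0.ne', sub_add_cancel]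
    _ ≤ L := hratio_le

theorem stmt7_general (p : ℝ) (hp : 1 < p) (N : ℕ)
    (q r : ℝ) (hpr : p ≤ r) (hrq : r < q)
    (hq : (q : EReal) < pstar p N) :
    Fsubc p N (fun s => s ^ (q - 1) - s ^ (r - 1)) := by
  have hr : 1 < r := hp.trans_le hpr
  obtain ⟨L, hqL, hLp⟩ := EReal.lt_iff_exists_real_btwn.mp hq
  have hqL : q < L := EReal.coe_lt_coe_iff.mp hqL
  have hL : 0 < L := by linarith
  obtain ⟨η, hη0, hη1, hηL⟩ := exists_lt_rpow_of_lt_one ((div_lt_one hL).mpr hqL) q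
  have hunbounded := tendsto_rpow_sub_rpow_div_rpow_atTop hpr hrq
  refine ⟨η, fun c => (hunbounded.eventually_gt_atTop c).frequently, hη0, hη1, L, hLp,
    eventually_fstar_mul_div_Fint_le (by linarith) hrq (by linarith) hη0 ?_⟩
  rwa [div_lt_iff₀ (rpow_pos_of_pos hη0 q), mul_comm, ← div_lt_iff₀ hL]

theorem stmt7 (p : ℝ) (hp : 1 < p) (N : ℕ) (hN : 1 ≤ N)
    (q r : ℝ) (hpr : p ≤ r) (hrq : r < q)
    (hq : (q : EReal) < pstar p N) :
    Fsubc p N (fun s => s ^ (q - 1) - s ^ (r - 1)) :=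
  stmt7_general p hp N q r hpr hrq hq
end

section
/- Let f̂ : ℝ → ℝ be continuous and F̂(s) = ∫_1^s f̂(σ) dσ. Let u be a C¹ function on an interval I ⊂ (0,∞) such that v(r) := r^{N-1} φ_p(u'(r)) is differentiable on I with v'(r) = -r^{N-1} f̂(u(r)). Then the energy H(r) := |u'(r)|^p/p' + F̂(u(r)) is differentiable on I with H'(r) = -((N-1)/r)·|u'(r)|^p for every r ∈ I. In particular H is non-increasing on I. -/
/-
Write `w = φ_p(u')`, so that `|u'|^p / p' = |w|^{p'} / p'`. Since `φ_{p'}` inverts `φ_p`, the chain rule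
gives `(|w|^{p'} / p')' = u' w'`, while dividing the equation `(r^{N-1} w)' = -r^{N-1} f̂(u)` by `r^{N-1}`
gives `w' = -f̂(u) - (N-1)/r · w`. Adding `(F̂(u))' = f̂(u) u'`, the `f̂` terms cancel and
`H' = -(N-1)/r · u' w = -(N-1)/r · |u'|^p ≤ 0`.
-/

open Real Set Filter Topology

section Phip

variable {p : ℝ}

lemma abs_phip (hp : 1 < p) (s : ℝ) : |phip p s| = |s| ^ (p - 1) := by
  rcases eq_or_ne s 0 with rfl | hs
  · simp [phip, Real.zero_rpow (by linarith : p - 1 ≠ 0)]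
  · rw [phip, abs_mul, abs_of_nonneg (Real.rpow_nonneg (abs_nonneg s) _),
      ← Real.rpow_add_one (abs_pos.2 hs).ne']
    ring_nf

lemma phip_conj_phip (hp : 1 < p) (s : ℝ) : phip (p / (p - 1)) (phip p s) = s := by
  rcases eq_or_ne s 0 with rfl | hs
  · simp [phip]
  · have hp1 : p - 1 ≠ 0 := by linarith
    rw [phip, abs_phip hp, ← Real.rpow_mul (abs_nonneg s), phip, ← mul_assoc,
      ← Real.rpow_add (abs_pos.2 hs),
      show (p - 1) * (p / (p - 1) - 2) + (p - 2) = 0 by field_simp; ring, Real.rpow_zero, one_mul]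

lemma abs_phip_rpow_conj (hp : 1 < p) (s : ℝ) : |phip p s| ^ (p / (p - 1)) = |s| ^ p := by
  have hp1 : p - 1 ≠ 0 := by linarith
  rw [abs_phip hp, ← Real.rpow_mul (abs_nonneg s)]
  congr 1
  field_simp

lemma mul_phip_self (hp : 1 < p) (s : ℝ) : s * phip p s = |s| ^ p := by
  rcases eq_or_ne s 0 with rfl | hs
  · simp [phip, Real.zero_rpow (by linarith : p ≠ 0)]
  · rw [phip, show s * (|s| ^ (p - 2) * s) = |s| ^ (p - 2) * |s| ^ (2 : ℝ) by
        rw [Real.rpow_two, sq_abs]; ring,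
      ← Real.rpow_add (abs_pos.2 hs)]
    norm_num

lemma HasDerivAt.abs_rpow_div_conj (hp : 1 < p) {y : ℝ → ℝ} {w' x : ℝ}
    (hw : HasDerivAt (fun t => phip p (y t)) w' x) :
    HasDerivAt (fun t => |y t| ^ p / (p / (p - 1))) (y x * w') x := by
  have hq : 1 < p / (p - 1) := by rw [lt_div_iff₀ (by linarith)]; linarith
  have h := ((hasDerivAt_abs_rpow (phip p (y x)) hq).comp x hw).div_const (p / (p - 1))
  simp only [Function.comp_def, abs_phip_rpow_conj hp] at h
  refine h.congr_deriv ?_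
  rw [mul_assoc, mul_assoc, mul_div_cancel_left₀ _ (by positivity), ← mul_assoc, ← phip,
    phip_conj_phip hp]

end Phip

lemma HasDerivAt.of_pow_mul {n : ℕ} {w : ℝ → ℝ} {c x : ℝ} (hx : x ≠ 0)
    (h : HasDerivAt (fun t => t ^ n * w t) (-(x ^ n) * c) x) :
    HasDerivAt w (-c - n / x * w x) x := by
  have hquot := h.div (hasDerivAt_pow n x) (pow_ne_zero n hx)
  have hloc : (fun t => t ^ n * w t / t ^ n) =ᶠ[𝓝 x] w := by
    filter_upwards [isOpen_ne.mem_nhds hx] with t ht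
    exact mul_div_cancel_left₀ _ (pow_ne_zero n ht)
  refine (hquot.congr_of_eventuallyEq hloc.symm).congr_deriv ?_
  rcases n with _ | k
  · simp
  · simp only [Nat.add_sub_cancel]
    field_simp
    ring

lemma hasDerivAt_intervalIntegral_comp {g u : ℝ → ℝ} {a x : ℝ} (hg : Continuous g)
    (hu : DifferentiableAt ℝ u x) :
    HasDerivAt (fun t => ∫ σ in a..u t, g σ) (g (u x) * deriv u x) x :=
  (intervalIntegral.integral_hasDerivAt_right (hg.intervalIntegrable _ _)
    (hg.stronglyMeasurableAtFilter _ _) hg.continuousAt).comp x hu.hasDerivAt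

theorem stmt8_general (p : ℝ) (hp : 1 < p) (N : ℕ) (hN : 1 ≤ N)
    (g : ℝ → ℝ) (hg : Continuous g)
    (I : Set ℝ) (hI : Convex ℝ I) (hIpos : I ⊆ Ioi 0)
    (u : ℝ → ℝ)
    (hu_diff : ∀ x ∈ I, DifferentiableAt ℝ u x)
    (hode : ∀ x ∈ I, HasDerivAt (fun t => t ^ (N - 1) * phip p (deriv u t))
      (-(x ^ (N - 1)) * g (u x)) x) :
    (∀ x ∈ I, HasDerivAt
      (fun t => |deriv u t| ^ p / (p / (p - 1)) + ∫ σ in (1:ℝ)..u t, g σ)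
      (-(((N : ℝ) - 1) / x) * |deriv u x| ^ p) x) ∧
    AntitoneOn (fun x => |deriv u x| ^ p / (p / (p - 1)) + ∫ σ in (1:ℝ)..u x, g σ) I := by
  have hderiv : ∀ x ∈ I, HasDerivAt
      (fun t => |deriv u t| ^ p / (p / (p - 1)) + ∫ σ in (1:ℝ)..u t, g σ)
      (-(((N : ℝ) - 1) / x) * |deriv u x| ^ p) x := by
    intro x hx
    have hw := (hode x hx).of_pow_mul (hIpos hx).ne'
    refine ((hw.abs_rpow_div_conj hp).add
      (hasDerivAt_intervalIntegral_comp hg (hu_diff x hx))).congr_deriv ?_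
    rw [Nat.cast_sub hN, Nat.cast_one, ← mul_phip_self hp]
    ring
  refine ⟨hderiv, antitoneOn_of_deriv_nonpos hI
    (fun x hx => (hderiv x hx).continuousAt.continuousWithinAt)
    (fun x hx => (hderiv x (interior_subset hx)).differentiableAt.differentiableWithinAt)
    fun x hx => ?_⟩
  have hxI := interior_subset hx
  rw [(hderiv x hxI).deriv, neg_mul, neg_nonpos]
  have hN1 : (1 : ℝ) ≤ N := by exact_mod_cast hN
  exact mul_nonneg (div_nonneg (by linarith) (hIpos hxI).le) (by positivity)

theorem stmt8 (p : ℝ) (hp : 1 < p) (N : ℕ) (hN : 1 ≤ N)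
    (g : ℝ → ℝ) (hg : Continuous g)
    (I : Set ℝ) (hI : Convex ℝ I) (hIpos : I ⊆ Ioi 0)
    (u : ℝ → ℝ)
    (hu_diff : ∀ x ∈ I, DifferentiableAt ℝ u x)
    (hu_cont : ContinuousOn (deriv u) I)
    (hode : ∀ x ∈ I, HasDerivAt (fun t => t ^ (N - 1) * phip p (deriv u t))
      (-(x ^ (N - 1)) * g (u x)) x) :
    (∀ x ∈ I, HasDerivAt
      (fun t => |deriv u t| ^ p / (p / (p - 1)) + ∫ σ in (1:ℝ)..u t, g σ)
      (-(((N : ℝ) - 1) / x) * |deriv u x| ^ p) x) ∧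
    AntitoneOn (fun x => |deriv u x| ^ p / (p / (p - 1)) + ∫ σ in (1:ℝ)..u x, g σ) I :=
  stmt8_general p hp N hN g hg I hI hIpos u hu_diff hode
end

section
/- Assume f satisfies (f_reg) and (f_eq), and let u be a C¹ function on (0,R2] such that v(r) := r^{N-1} φ_p(u'(r)) is differentiable on (0,R2] with v'(r) = -r^{N-1} f̂(u(r)). Then the function r ↦ r^{p'(N-1)} H(r) is non-decreasing on (0,R2], where H(r) := |u'(r)|^p/p' + F̂(u(r)). -/
open Real Set Filter Topology

lemma fhat_cont {f : ℝ → ℝ} (hreg : Freg f) (heq : Feq f) : Continuous (fhat f) := by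
  have h : fhat f = fun s => f (max s 0) := by
    funext s
    by_cases hs : 0 ≤ s
    · simp [fhat, hs, max_eq_left hs]
    · simp [fhat, hs, max_eq_right (le_of_not_ge hs), heq.1]
  rw [h]
  exact hreg.1.comp_continuous (continuous_id.max continuous_const)
    (fun s => le_max_right s 0)

lemma fhat_nonpos {f : ℝ → ℝ} (heq : Feq f) {s : ℝ} (hs : s ≤ 1) : fhat f s ≤ 0 := by
  unfold fhat
  split_ifs with h
  · rcases eq_or_lt_of_le h with h0 | h0
    · simp [← h0, heq.1]
    · rcases eq_or_lt_of_le hs with h1 | h1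
      · simp [h1, heq.2.1]
      · exact (heq.2.2.1 s h0 h1).le
  · exact le_refl _
    
lemma fhat_nonneg {f : ℝ → ℝ} (heq : Feq f) {s : ℝ} (hs : 1 ≤ s) : 0 ≤ fhat f s := by
  unfold fhat
  rw [if_pos (by linarith)]
  rcases eq_or_lt_of_le hs with h1 | h1
  · simp [← h1, heq.2.1]
  · exact (heq.2.2.2 s h1).le

lemma Fhat_hasDerivAt {f : ℝ → ℝ} (hreg : Freg f) (heq : Feq f) (s : ℝ) :
    HasDerivAt (Fhat f) (fhat f s) s :=
  ((fhat_cont hreg heq).integral_hasStrictDerivAt 1 s).hasDerivAt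

lemma Fhat_nonneg {f : ℝ → ℝ} (hreg : Freg f) (heq : Feq f) (s : ℝ) : 0 ≤ Fhat f s := by
  have hc := fhat_cont hreg heq
  rcases le_total s 1 with hs | hs
  · have h1 : Fhat f s = -∫ σ in s..(1:ℝ), fhat f σ := by
      rw [Fhat, intervalIntegral.integral_symm]
    have h2 : (0:ℝ) ≤ ∫ σ in s..(1:ℝ), -fhat f σ :=
      intervalIntegral.integral_nonneg hs (fun σ hσ => neg_nonneg.mpr (fhat_nonpos heq hσ.2))
    rw [intervalIntegral.integral_neg] at h2
    rw [h1]
    linarith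
  · exact intervalIntegral.integral_nonneg hs (fun σ hσ => fhat_nonneg heq hσ.1)

theorem stmt14 (p : ℝ) (hp : 1 < p) (N : ℕ) (hN : 1 ≤ N)
    (R2 : ℝ) (hR2 : 0 < R2)
    (f : ℝ → ℝ) (hreg : Freg f) (heq : Feq f)
    (u : ℝ → ℝ)
    (hu_diff : ∀ x ∈ Ioc (0:ℝ) R2, DifferentiableAt ℝ u x)
    (hu_cont : ContinuousOn (deriv u) (Ioc 0 R2))
    (hode : ∀ x ∈ Ioc (0:ℝ) R2,
      HasDerivAt (fun t => t ^ (N - 1) * phip p (deriv u t))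
        (-(x ^ (N - 1)) * fhat f (u x)) x) :
    MonotoneOn (fun x => x ^ ((p / (p - 1)) * ((N : ℝ) - 1)) * energy p f u x) (Ioc 0 R2) := by
  have hp1 : (0:ℝ) < p - 1 := by linarith
  set q : ℝ := p / (p - 1) with hqdef
  have hq1 : 1 < q := (one_lt_div hp1).mpr (by linarith)
  have hq0 : q ≠ 0 := by linarith
  have hqp : q * (p - 1) = p := div_mul_cancel₀ p (ne_of_gt hp1)
  set c : ℝ := q * ((N:ℝ) - 1) with hcdef
  set e : ℝ := (N:ℝ) - 1 with hedef
  have hN1 : (0:ℝ) ≤ e := by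
    have : (1:ℝ) ≤ N := by exact_mod_cast hN
    rw [hedef]; linarith
  have hc0 : 0 ≤ c := mul_nonneg (by linarith) hN1
  have hce : c = e * q := by rw [hcdef]; ring
  set v : ℝ → ℝ := fun t => t ^ (N - 1) * phip p (deriv u t) with hvdef
  have hpow' : ∀ x : ℝ, 0 < x → (x ^ (N - 1) : ℝ) = x ^ e := by
    intro x hx
    rw [← Real.rpow_natCast x (N-1)]
    congr 1
    rw [Nat.cast_sub hN, Nat.cast_one, hedef]
  have habs : ∀ x : ℝ, 0 < x → |v x| = x ^ e * |deriv u x| ^ (p - 1) := by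
    intro x hx
    have hxe : (0:ℝ) < x ^ e := Real.rpow_pos_of_pos hx e
    simp only [hvdef, phip, hpow' x hx, abs_mul, abs_of_pos hxe,
      abs_of_nonneg (Real.rpow_nonneg (abs_nonneg _) _), abs_abs]
    congr 1
    rcases eq_or_ne (deriv u x) 0 with hd | hd
    · simp [hd, Real.zero_rpow (ne_of_gt hp1)]
    · rw [← Real.rpow_add_one (abs_ne_zero.mpr hd) (p-2)]
      congr 1
      ring
  have key : ∀ x : ℝ, 0 < x → |v x| ^ (q - 2) * v x * x ^ e = x ^ c * deriv u x := by
    intro x hx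
    rcases eq_or_ne (deriv u x) 0 with hd | hd
    · have hv0 : v x = 0 := by simp [hvdef, phip, hd]
      simp [hv0, hd]
    · have hdp : (0:ℝ) < |deriv u x| := abs_pos.mpr hd
      have hxe : (0:ℝ) < x ^ e := Real.rpow_pos_of_pos hx e
      have h1 : |v x| ^ (q-2) = x ^ (e*(q-2)) * |deriv u x| ^ ((p-1)*(q-2)) := by
        rw [habs x hx, Real.mul_rpow hxe.le (Real.rpow_nonneg (abs_nonneg _) _),
            ← Real.rpow_mul hx.le, ← Real.rpow_mul (abs_nonneg _)]
      have hvx : v x = x ^ e * (|deriv u x| ^ (p-2) * deriv u x) := by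
        simp only [hvdef, phip, hpow' x hx]
      have e1 : x ^ (e*(q-2)) * x ^ e * x ^ e = x ^ c := by
        rw [← Real.rpow_add hx, ← Real.rpow_add hx, hce]
        congr 1
        ring
      have e2 : |deriv u x| ^ ((p-1)*(q-2)) * |deriv u x| ^ (p-2) = 1 := by
        rw [← Real.rpow_add hdp,
          show (p-1)*(q-2) + (p-2) = 0 from by linear_combination hqp]
        exact Real.rpow_zero _
      rw [h1, hvx]
      calc x ^ (e*(q-2)) * |deriv u x| ^ ((p-1)*(q-2)) *
            (x ^ e * (|deriv u x| ^ (p-2) * deriv u x)) * x ^ e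
          = (x ^ (e*(q-2)) * x ^ e * x ^ e) *
            (|deriv u x| ^ ((p-1)*(q-2)) * |deriv u x| ^ (p-2)) * deriv u x := by ring
        _ = x ^ c * 1 * deriv u x := by rw [e1, e2]
        _ = x ^ c * deriv u x := by ring
  have hcF := fhat_cont hreg heq
  have hFd := Fhat_hasDerivAt hreg heq
  have hFn := Fhat_nonneg hreg heq
  have hu_c : ContinuousOn u (Ioc 0 R2) :=
    fun x hx => ((hu_diff x hx).continuousAt).continuousWithinAt
  have hFhat_c : Continuous (Fhat f) :=
    (Differentiable.continuous (fun s => (hFd s).differentiableAt))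
  set G : ℝ → ℝ := fun x => x ^ c * energy p f u x with hGdef
  have hGc : ContinuousOn G (Ioc 0 R2) := by
    apply ContinuousOn.mul
    · exact fun x hx => (Real.continuousAt_rpow_const x c (Or.inl (ne_of_gt hx.1))).continuousWithinAt
    · show ContinuousOn (fun x => |deriv u x| ^ p / q + Fhat f (u x)) (Ioc 0 R2)
      exact ((hu_cont.abs.rpow_const (fun x _ => Or.inr (by linarith))).div_const q).add
        (hFhat_c.comp_continuousOn hu_c)
  have hG : ∀ x ∈ Ioo (0:ℝ) R2, HasDerivAt G (c * x ^ (c-1) * Fhat f (u x)) x := by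
    intro x hx
    have hx0 : 0 < x := hx.1
    have hxI : x ∈ Ioc (0:ℝ) R2 := ⟨hx.1, hx.2.le⟩
    have hv : HasDerivAt v (-(x ^ (N-1)) * fhat f (u x)) x := hode x hxI
    have hA : HasDerivAt (fun t => |v t| ^ q / q)
        ((q * |v x| ^ (q-2) * v x) * (-(x ^ (N-1)) * fhat f (u x)) / q) x :=
      ((hasDerivAt_abs_rpow (v x) hq1).comp x hv).div_const q
    have hu' : HasDerivAt u (deriv u x) x := (hu_diff x hxI).hasDerivAt
    have hB : HasDerivAt (fun t => t ^ c * Fhat f (u t))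
        (c * x ^ (c-1) * Fhat f (u x) + x ^ c * (fhat f (u x) * deriv u x)) x :=
      (Real.hasDerivAt_rpow_const (Or.inl hx0.ne')).mul ((hFd (u x)).comp x hu')
    have hsum := hA.add hB
    have heqv : G =ᶠ[𝓝 x] fun t => |v t| ^ q / q + t ^ c * Fhat f (u t) := by
      filter_upwards [isOpen_Ioi.mem_nhds (mem_Ioi.mpr hx0)] with t ht
      have ht0 : (0:ℝ) < t := ht
      have hkey2 : |v t| ^ q = t ^ c * |deriv u t| ^ p := by
        rw [habs t ht0,
            Real.mul_rpow (Real.rpow_pos_of_pos ht0 e).le (Real.rpow_nonneg (abs_nonneg _) _),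
            ← Real.rpow_mul ht0.le, ← Real.rpow_mul (abs_nonneg _), hce,
            show (p-1)*q = p from by linear_combination hqp]
      show t ^ c * energy p f u t = |v t| ^ q / q + t ^ c * Fhat f (u t)
      simp only [energy, ← hqdef]
      rw [hkey2]
      ring
    have hfinal := hsum.congr_of_eventuallyEq heqv
    have hD : (q * |v x| ^ (q-2) * v x) * (-(x ^ (N-1)) * fhat f (u x)) / q
        + (c * x ^ (c-1) * Fhat f (u x) + x ^ c * (fhat f (u x) * deriv u x))
        = c * x ^ (c-1) * Fhat f (u x) := by
      have hk := key x hx0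
      rw [hpow' x hx0]
      have h1 : (q * |v x| ^ (q-2) * v x) * (-(x ^ e) * fhat f (u x)) / q
          = -(|v x| ^ (q-2) * v x * x ^ e * fhat f (u x)) := by
        field_simp
      rw [h1]
      rw [hk]
      ring
    exact hD ▸ hfinal
  intro a ha b hb hab
  rcases eq_or_lt_of_le hab with rfl | hlt
  · exact le_rfl
  have hsub : Icc a b ⊆ Ioc 0 R2 := fun t ht => ⟨lt_of_lt_of_le ha.1 ht.1, le_trans ht.2 hb.2⟩
  have hmono : MonotoneOn G (Icc a b) := by
    apply monotoneOn_of_deriv_nonneg (convex_Icc a b) (hGc.mono hsub)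
    · intro x hx
      rw [interior_Icc] at hx
      have hxI : x ∈ Ioo (0:ℝ) R2 := ⟨lt_trans ha.1 hx.1, lt_of_lt_of_le hx.2 hb.2⟩
      exact ((hG x hxI).differentiableAt).differentiableWithinAt
    · intro x hx
      rw [interior_Icc] at hx
      have hxI : x ∈ Ioo (0:ℝ) R2 := ⟨lt_trans ha.1 hx.1, lt_of_lt_of_le hx.2 hb.2⟩
      rw [(hG x hxI).deriv]
      exact mul_nonneg (mul_nonneg hc0 (Real.rpow_nonneg hxI.1.le _)) (hFn _)
  exact hmono (left_mem_Icc.mpr hab) (right_mem_Icc.mpr hab) hab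
end
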